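/- arXiv:math/0409476 — 3 statements merged into one kernel-verified Lean document; each statement's English description precedes it below -/
import Mathlib

section
/- Let g be a finite-dimensional real Lie algebra and α an automorphism of g. Then the subspace g⁻(α) spanned by the generalized eigenspaces of α for eigenvalues of modulus < 1 is a Lie subalgebra of g. -/
open TensorProduct

/-- The real subspace of `g` corresponding to the sum of the generalized eigenspaces
(taken in the complexification `ℂ ⊗[ℝ] g`) of the complexified endomorphism, for
eigenvalues `μ` whose modulus satisfies the predicate `P`. -/
noncomputable def modulusSubspace {g : Type*} [AddCommGroup g] [Module ℝ g]
    (f : g →ₗ[ℝ] g) (P : ℝ → Prop) : Submodule ℝ g :=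
  Submodule.comap ((TensorProduct.mk ℝ ℂ g) 1)
    ((⨆ μ ∈ {z : ℂ | P ‖z‖},
      Module.End.maxGenEigenspace (LinearMap.baseChange ℂ f) μ).restrictScalars ℝ)


section Aux

variable {L : Type*} [LieRing L] [LieAlgebra ℂ L]

lemma aux_key_identity (σ : Module.End ℂ L) (hσ : ∀ x y : L, σ ⁅x, y⁆ = ⁅σ x, σ y⁆)
    (μ ν : ℂ) (x y : L) :
    (σ - (μ * ν) • 1) ⁅x, y⁆ = ⁅(σ - μ • 1) x, σ y⁆ + μ • ⁅x, (σ - ν • 1) y⁆ := by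
  simp only [LinearMap.sub_apply, LinearMap.smul_apply, Module.End.one_apply, hσ,
    sub_lie, lie_sub, smul_lie, lie_smul, smul_sub, smul_smul]
  abel

lemma aux_pow_lie (σ : Module.End ℂ L) (hσ : ∀ x y : L, σ ⁅x, y⁆ = ⁅σ x, σ y⁆)
    (μ ν : ℂ) : ∀ n k l : ℕ, ∀ x y : L, k + l = n →
      ((σ - μ • 1) ^ k) x = 0 → ((σ - ν • 1) ^ l) y = 0 →
      ((σ - (μ * ν) • 1) ^ n) ⁅x, y⁆ = 0 := by
  intro n
  induction n with
  | zero =>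
    intro k l x y hkl hx hy
    obtain ⟨rfl, rfl⟩ := Nat.add_eq_zero.mp hkl
    simp only [pow_zero, Module.End.one_apply] at hx hy ⊢
    rw [hx, zero_lie]
  | succ n ih =>
    intro k l x y hkl hx hy
    match k, l with
    | 0, l =>
      simp only [pow_zero, Module.End.one_apply] at hx
      rw [hx, zero_lie, map_zero]
    | k, 0 =>
      simp only [pow_zero, Module.End.one_apply] at hy
      rw [hy, lie_zero, map_zero]
    | k + 1, l + 1 =>
      have hn : (σ - (μ * ν) • 1) ^ (n + 1) = (σ - (μ * ν) • 1) ^ n * (σ - (μ * ν) • 1) :=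
        (pow_succ _ _)
      rw [hn, Module.End.mul_apply, aux_key_identity σ hσ μ ν x y, map_add, map_smul]
      have h1 : ((σ - (μ * ν) • 1) ^ n) ⁅(σ - μ • 1) x, σ y⁆ = 0 := by
        apply ih k (l + 1) _ _ (by omega)
        · rw [← Module.End.mul_apply, ← pow_succ]
          exact hx
        · have hc : σ * (σ - ν • 1) ^ (l + 1) = (σ - ν • 1) ^ (l + 1) * σ := by
            refine (Commute.pow_right ?_ _).eq
            exact (Commute.refl σ).sub_right ((Commute.one_right σ).smul_right ν)
          rw [← Module.End.mul_apply, ← hc, Module.End.mul_apply, hy, map_zero]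
      have h2 : ((σ - (μ * ν) • 1) ^ n) ⁅x, (σ - ν • 1) y⁆ = 0 := by
        apply ih (k + 1) l _ _ (by omega) hx
        rw [← Module.End.mul_apply, ← pow_succ]
        exact hy
      rw [h1, h2, smul_zero, add_zero]

lemma aux_lie_mem_sup_left (σ : Module.End ℂ L) (hσ : ∀ x y : L, σ ⁅x, y⁆ = ⁅σ x, σ y⁆)
    (S : Set ℂ) (hS : ∀ μ ∈ S, ∀ ν ∈ S, μ * ν ∈ S)
    {μ : ℂ} (hμ : μ ∈ S) {x y : L} (hx : x ∈ σ.maxGenEigenspace μ)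
    (hy : y ∈ ⨆ ν ∈ S, σ.maxGenEigenspace ν) :
    ⁅x, y⁆ ∈ ⨆ ν ∈ S, σ.maxGenEigenspace ν := by
  rw [iSup_subtype'] at hy ⊢
  induction hy using Submodule.iSup_induction' with
  | mem ν y hy =>
    obtain ⟨k, hk⟩ := (Module.End.mem_maxGenEigenspace _ _ _).mp hx
    obtain ⟨l, hl⟩ := (Module.End.mem_maxGenEigenspace _ _ _).mp hy
    refine Submodule.mem_iSup_of_mem ⟨μ * (ν : ℂ), hS μ hμ ν ν.2⟩ ?_
    exact (Module.End.mem_maxGenEigenspace _ _ _).mpr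
      ⟨k + l, aux_pow_lie σ hσ μ ν (k + l) k l x y rfl hk hl⟩
  | zero => simp
  | add y₁ y₂ hy₁ hy₂ ih₁ ih₂ =>
    rw [lie_add]; exact add_mem ih₁ ih₂

lemma aux_lie_mem_sup (σ : Module.End ℂ L) (hσ : ∀ x y : L, σ ⁅x, y⁆ = ⁅σ x, σ y⁆)
    (S : Set ℂ) (hS : ∀ μ ∈ S, ∀ ν ∈ S, μ * ν ∈ S)
    {x y : L} (hx : x ∈ ⨆ μ ∈ S, σ.maxGenEigenspace μ)
    (hy : y ∈ ⨆ μ ∈ S, σ.maxGenEigenspace μ) :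
    ⁅x, y⁆ ∈ ⨆ μ ∈ S, σ.maxGenEigenspace μ := by
  rw [iSup_subtype'] at hx
  induction hx using Submodule.iSup_induction' with
  | mem μ x hx =>
    exact aux_lie_mem_sup_left σ hσ S hS μ.2 hx hy
  | zero => simp
  | add x₁ x₂ hx₁ hx₂ ih₁ ih₂ =>
    rw [add_lie]; exact add_mem ih₁ ih₂

end Aux

lemma baseChange_bracket {g : Type*} [LieRing g] [LieAlgebra ℝ g] (α : g ≃ₗ⁅ℝ⁆ g)
    (u v : ℂ ⊗[ℝ] g) :
    LinearMap.baseChange ℂ (α.toLinearEquiv : g →ₗ[ℝ] g) ⁅u, v⁆ =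
      ⁅LinearMap.baseChange ℂ (α.toLinearEquiv : g →ₗ[ℝ] g) u,
       LinearMap.baseChange ℂ (α.toLinearEquiv : g →ₗ[ℝ] g) v⁆ := by
  set f := LinearMap.baseChange ℂ (α.toLinearEquiv : g →ₗ[ℝ] g) with hf
  induction u using TensorProduct.induction_on with
  | zero => rw [zero_lie v, map_zero, zero_lie (f v)]
  | tmul a x =>
    induction v using TensorProduct.induction_on with
    | zero => rw [lie_zero (a ⊗ₜ[ℝ] x), map_zero, lie_zero (f (a ⊗ₜ[ℝ] x))]
    | tmul b y =>
      rw [LieAlgebra.ExtendScalars.bracket_tmul, LinearMap.baseChange_tmul,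
        LinearMap.baseChange_tmul, LinearMap.baseChange_tmul,
        LieAlgebra.ExtendScalars.bracket_tmul]
      congr 1
      exact α.map_lie x y
    | add v₁ v₂ ih₁ ih₂ =>
      rw [lie_add (a ⊗ₜ[ℝ] x) v₁ v₂, map_add, map_add, ih₁, ih₂,
        lie_add (f (a ⊗ₜ[ℝ] x)) (f v₁) (f v₂)]
  | add u₁ u₂ ih₁ ih₂ =>
    rw [add_lie u₁ u₂ v, map_add, map_add, ih₁, ih₂, add_lie (f u₁) (f u₂) (f v)]

/-- The subspace `g⁻(α)` spanned by the generalized eigenspaces of an automorphism `α`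
of a finite-dimensional real Lie algebra `g` for eigenvalues of modulus `< 1`
is a Lie subalgebra of `g`. -/
theorem gMinus_isLieSubalgebra {g : Type*} [LieRing g] [LieAlgebra ℝ g]
    [FiniteDimensional ℝ g] (α : g ≃ₗ⁅ℝ⁆ g) :
    ∀ x ∈ modulusSubspace (α.toLinearEquiv : g →ₗ[ℝ] g) (fun r => r < 1),
    ∀ y ∈ modulusSubspace (α.toLinearEquiv : g →ₗ[ℝ] g) (fun r => r < 1),
      ⁅x, y⁆ ∈ modulusSubspace (α.toLinearEquiv : g →ₗ[ℝ] g) (fun r => r < 1) := by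
  intro x hx y hy
  simp only [modulusSubspace, Submodule.mem_comap, Submodule.restrictScalars_mem] at hx hy ⊢
  have hmk : ∀ z w : g, (TensorProduct.mk ℝ ℂ g) 1 ⁅z, w⁆ =
      ⁅(TensorProduct.mk ℝ ℂ g) 1 z, (TensorProduct.mk ℝ ℂ g) 1 w⁆ := by
    intro z w
    simp only [TensorProduct.mk_apply, LieAlgebra.ExtendScalars.bracket_tmul, one_mul]
  rw [hmk]
  refine aux_lie_mem_sup _ (baseChange_bracket α) _ ?_ hx hy
  intro μ hμ ν hν
  simp only [Set.mem_setOf_eq, norm_mul] at hμ hν ⊢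
  have h0 : (0:ℝ) ≤ ‖μ‖ := norm_nonneg _
  have h1 : (0:ℝ) ≤ ‖ν‖ := norm_nonneg _
  nlinarith
end

section
/- Let n₄ be the 4-dimensional filiform Lie algebra with basis x₁,x₂,x₃,x₄ and nonzero brackets [x₁,x₂]=x₃, [x₁,x₃]=x₄. Then every derivation of n₄ is represented by a lower-triangular matrix with respect to this basis; in particular, the derivation algebra Der(n₄) is a solvable Lie algebra. -/
/-- Let `n₄` be the 4-dimensional filiform Lie algebra with basis `x₁, x₂, x₃, x₄` and
nonzero brackets `[x₁,x₂] = x₃`, `[x₁,x₃] = x₄`.  Then every derivation of `n₄` is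
lower-triangular with respect to this basis (the coefficient of `xᵢ` in `D xⱼ` vanishes
for `i < j`), and the derivation algebra `Der(n₄)` is solvable. -/
theorem derivations_filiform_lowerTriangular_and_solvable
    {L : Type*} [LieRing L] [LieAlgebra ℝ L]
    (b : Module.Basis (Fin 4) ℝ L)
    (h12 : ⁅b 0, b 1⁆ = b 2) (h13 : ⁅b 0, b 2⁆ = b 3) (h14 : ⁅b 0, b 3⁆ = 0)
    (h23 : ⁅b 1, b 2⁆ = 0) (h24 : ⁅b 1, b 3⁆ = 0) (h34 : ⁅b 2, b 3⁆ = 0) :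
    (∀ (D : LieDerivation ℝ L L) (i j : Fin 4), i < j → b.repr (D (b j)) i = 0) ∧
    LieAlgebra.IsSolvable (LieDerivation ℝ L L) := by
  -- reversed structure constants
  have h21 : ⁅b 1, b 0⁆ = -b 2 := by rw [← lie_skew, h12]
  have h31 : ⁅b 2, b 0⁆ = -b 3 := by rw [← lie_skew, h13]
  have h41 : ⁅b 3, b 0⁆ = 0 := by rw [← lie_skew, h14, neg_zero]
  have h32 : ⁅b 2, b 1⁆ = 0 := by rw [← lie_skew, h23, neg_zero]
  have h42 : ⁅b 3, b 1⁆ = 0 := by rw [← lie_skew, h24, neg_zero]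
  have h43 : ⁅b 3, b 2⁆ = 0 := by rw [← lie_skew, h34, neg_zero]
  -- bracket with a general element
  have hb1 : ∀ u : L, ⁅u, b 1⁆ = b.repr u 0 • b 2 := by
    intro u
    conv_lhs => rw [← b.sum_repr u]
    rw [Fin.sum_univ_four]
    simp [h12, h32, h42]
  have hb2 : ∀ u : L, ⁅u, b 2⁆ = b.repr u 0 • b 3 := by
    intro u
    conv_lhs => rw [← b.sum_repr u]
    rw [Fin.sum_univ_four]
    simp [h13, h23, h43]
  have hb0 : ∀ u : L, ⁅b 0, u⁆ = b.repr u 1 • b 2 + b.repr u 2 • b 3 := by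
    intro u
    conv_lhs => rw [← b.sum_repr u]
    rw [Fin.sum_univ_four]
    simp [h12, h13, h14]
  -- image of b 2 under a derivation
  have key2 : ∀ D : LieDerivation ℝ L L,
      D (b 2) = (b.repr (D (b 0)) 0 + b.repr (D (b 1)) 1) • b 2
        + b.repr (D (b 1)) 2 • b 3 := by
    intro D
    have : D (b 2) = ⁅b 0, D (b 1)⁆ + ⁅D (b 0), b 1⁆ := by
      rw [← h12, LieDerivation.apply_lie_eq_add]
    rw [this, hb0, hb1]
    module
  -- (0,1) entry vanishes
  have key1 : ∀ D : LieDerivation ℝ L L, b.repr (D (b 1)) 0 = 0 := by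
    intro D
    have h0 : (0 : L) = ⁅b 1, D (b 2)⁆ + ⁅D (b 1), b 2⁆ := by
      rw [← LieDerivation.apply_lie_eq_add, h23, map_zero]
    rw [key2 D, hb2] at h0
    simp only [lie_add, lie_smul, h23, h24, smul_zero, add_zero, zero_add] at h0
    rcases smul_eq_zero.mp h0.symm with h | h
    · exact h
    · exact absurd h (b.ne_zero 3)
  -- image of b 3 under a derivation
  have key3 : ∀ D : LieDerivation ℝ L L,
      D (b 3) = (2 * b.repr (D (b 0)) 0 + b.repr (D (b 1)) 1) • b 3 := by
    intro D
    have h' : D (b 3) = ⁅b 0, D (b 2)⁆ + ⁅D (b 0), b 2⁆ := by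
      rw [← h13, LieDerivation.apply_lie_eq_add]
    rw [key2 D] at h'
    rw [h', hb2]
    simp only [lie_add, lie_smul, h13, h14, smul_zero, add_zero]
    module
  -- coordinates of D (b 2) and D (b 3)
  have rep2 : ∀ (D : LieDerivation ℝ L L) (i : Fin 4), b.repr (D (b 2)) i =
      (b.repr (D (b 0)) 0 + b.repr (D (b 1)) 1) * (if i = 2 then 1 else 0)
        + b.repr (D (b 1)) 2 * (if i = 3 then 1 else 0) := by
    intro D i
    rw [key2 D]
    simp only [map_add, map_smul, Finsupp.add_apply, Finsupp.smul_apply, Module.Basis.repr_self,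
      Finsupp.single_apply, smul_eq_mul, eq_comm]
  have rep3 : ∀ (D : LieDerivation ℝ L L) (i : Fin 4), b.repr (D (b 3)) i =
      (2 * b.repr (D (b 0)) 0 + b.repr (D (b 1)) 1) * (if i = 3 then 1 else 0) := by
    intro D i
    rw [key3 D]
    simp only [map_smul, Finsupp.smul_apply, Module.Basis.repr_self,
      Finsupp.single_apply, smul_eq_mul, eq_comm]
  -- part 1: lower triangularity
  have part1 : ∀ (D : LieDerivation ℝ L L) (i j : Fin 4), i < j → b.repr (D (b j)) i = 0 := by
    intro D i j hij
    fin_cases j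
    · exact absurd (hij : (i : ℕ) < 0) (Nat.not_lt_zero _)
    · have hv : (i : ℕ) < 1 := hij
      have h0 : i = 0 := by
        refine Fin.ext ?_
        simp only [Fin.val_zero]
        omega
      subst h0
      exact key1 D
    · have hv : (i : ℕ) < 2 := hij
      have h2 : i ≠ 2 := by rintro rfl; exact absurd hv (by decide)
      have h3 : i ≠ 3 := by rintro rfl; exact absurd hv (by decide)
      show b.repr (D (b 2)) i = 0
      rw [rep2 D]
      simp [h2, h3]
    · have hv : (i : ℕ) < 3 := hij
      have h3 : i ≠ 3 := by rintro rfl; exact absurd hv (by decide)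
      show b.repr (D (b 3)) i = 0
      rw [rep3 D]
      simp [h3]
  refine ⟨part1, ?_⟩
  -- coordinate formulas for D u
  have row0 : ∀ (D : LieDerivation ℝ L L) (u : L),
      b.repr (D u) 0 = b.repr u 0 * b.repr (D (b 0)) 0 := by
    intro D u
    conv_lhs => rw [← b.sum_repr u]
    rw [map_sum, map_sum, Fin.sum_univ_four]
    simp only [map_smul, Finsupp.coe_add, Finsupp.coe_smul, Pi.add_apply, Pi.smul_apply,
      smul_eq_mul]
    rw [key1 D, rep2 D 0, rep3 D 0,
      if_neg (show ¬ ((0 : Fin 4) = 2) by decide), if_neg (show ¬ ((0 : Fin 4) = 3) by decide)]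
    ring
  have row1 : ∀ (D : LieDerivation ℝ L L) (u : L),
      b.repr (D u) 1 = b.repr u 0 * b.repr (D (b 0)) 1
        + b.repr u 1 * b.repr (D (b 1)) 1 := by
    intro D u
    conv_lhs => rw [← b.sum_repr u]
    rw [map_sum, map_sum, Fin.sum_univ_four]
    simp only [map_smul, Finsupp.coe_add, Finsupp.coe_smul, Pi.add_apply, Pi.smul_apply,
      smul_eq_mul]
    rw [rep2 D 1, rep3 D 1,
      if_neg (show ¬ ((1 : Fin 4) = 2) by decide), if_neg (show ¬ ((1 : Fin 4) = 3) by decide)]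
    ring
  have row2 : ∀ (D : LieDerivation ℝ L L) (u : L),
      b.repr (D u) 2 = b.repr u 0 * b.repr (D (b 0)) 2
        + b.repr u 1 * b.repr (D (b 1)) 2
        + b.repr u 2 * (b.repr (D (b 0)) 0 + b.repr (D (b 1)) 1) := by
    intro D u
    conv_lhs => rw [← b.sum_repr u]
    rw [map_sum, map_sum, Fin.sum_univ_four]
    simp only [map_smul, Finsupp.coe_add, Finsupp.coe_smul, Pi.add_apply, Pi.smul_apply,
      smul_eq_mul]
    rw [rep2 D 2, rep3 D 2,
      if_pos (show (2 : Fin 4) = 2 from rfl), if_neg (show ¬ ((2 : Fin 4) = 3) by decide)]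
    ring
  -- the predicates cutting out the derived series bounds
  let P₁ : LieDerivation ℝ L L → Prop := fun D => b.repr (D (b 0)) 0 = 0 ∧ b.repr (D (b 1)) 1 = 0
  let P₂ : LieDerivation ℝ L L → Prop := fun D => P₁ D ∧ b.repr (D (b 0)) 1 = 0 ∧ b.repr (D (b 1)) 2 = 0
  -- brackets of arbitrary derivations satisfy P₁
  have stepA : ∀ D E : LieDerivation ℝ L L, P₁ ⁅D, E⁆ := by
    intro D E
    constructor
    · rw [LieDerivation.commutator_apply, map_sub, Finsupp.sub_apply,
        row0 D (E (b 0)), row0 E (D (b 0)), row0 D (b 0), row0 E (b 0)]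
      ring
    · rw [LieDerivation.commutator_apply, map_sub, Finsupp.sub_apply,
        row1 D (E (b 1)), row1 E (D (b 1)), key1 D, key1 E]
      ring
  -- brackets of P₁ elements satisfy P₂
  have stepB : ∀ D E : LieDerivation ℝ L L, P₁ D → P₁ E → P₂ ⁅D, E⁆ := by
    intro D E hD hE
    refine ⟨stepA D E, ?_, ?_⟩
    · rw [LieDerivation.commutator_apply, map_sub, Finsupp.sub_apply,
        row1 D (E (b 0)), row1 E (D (b 0)), row0 D (b 0), row0 E (b 0),
        hD.1, hE.1, hD.2, hE.2]
      ring
    · rw [LieDerivation.commutator_apply, map_sub, Finsupp.sub_apply,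
        row2 D (E (b 1)), row2 E (D (b 1)), key1 D, key1 E, hD.1, hE.1, hD.2, hE.2]
      ring
  -- brackets of P₂ elements vanish
  have stepC : ∀ D E : LieDerivation ℝ L L, P₂ D → P₂ E → ⁅D, E⁆ = 0 := by
    intro D E hD hE
    -- under P₂, D vanishes on b 2 and b 3 and maps everything into span {b 2, b 3}
    have himg : ∀ F : LieDerivation ℝ L L, P₂ F →
        (F (b 2) = 0 ∧ F (b 3) = 0 ∧
          ∀ u, F u = b.repr u 0 • F (b 0) + b.repr u 1 • F (b 1)) := by
      intro F hF
      have h2 : F (b 2) = 0 := by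
        rw [key2 F, hF.1.1, hF.1.2, hF.2.2]; simp
      have h3 : F (b 3) = 0 := by
        rw [key3 F, hF.1.1, hF.1.2]; simp
      refine ⟨h2, h3, fun u => ?_⟩
      conv_lhs => rw [← b.sum_repr u]
      rw [map_sum, Fin.sum_univ_four]
      simp [map_smul, h2, h3]
    obtain ⟨hD2, hD3, hDu⟩ := himg D hD
    obtain ⟨hE2, hE3, hEu⟩ := himg E hE
    -- key: images of D lie in span {b 2, b 3}, which E kills, and conversely
    have hDspan : ∀ u, D (E u) = 0 := by
      intro u
      rw [hEu u, map_add, map_smul, map_smul, hDu (E (b 0)), hDu (E (b 1))]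
      rw [hE.1.1, hE.2.1, key1 E, hE.1.2]
      simp
    have hEspan : ∀ u, E (D u) = 0 := by
      intro u
      rw [hDu u, map_add, map_smul, map_smul, hEu (D (b 0)), hEu (D (b 1))]
      rw [hD.1.1, hD.2.1, key1 D, hD.1.2]
      simp
    apply LieDerivation.ext
    intro a
    rw [LieDerivation.commutator_apply, hDspan a, hEspan a]
    simp
  -- closure of the predicates under the module structure
  have closP₁ : P₁ 0 ∧ (∀ x y : LieDerivation ℝ L L, P₁ x → P₁ y → P₁ (x + y)) ∧
      (∀ (r : ℝ) (x : LieDerivation ℝ L L), P₁ x → P₁ (r • x)) := by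
    refine ⟨⟨?_, ?_⟩, fun x y hx hy => ⟨?_, ?_⟩, fun r x hx => ⟨?_, ?_⟩⟩
    · simp [LieDerivation.zero_apply]
    · simp [LieDerivation.zero_apply]
    · simp [LieDerivation.add_apply, map_add, Finsupp.add_apply, hx.1, hy.1]
    · simp [LieDerivation.add_apply, map_add, Finsupp.add_apply, hx.2, hy.2]
    · simp [LieDerivation.smul_apply, map_smul, Finsupp.smul_apply, hx.1]
    · simp [LieDerivation.smul_apply, map_smul, Finsupp.smul_apply, hx.2]
  have closP₂ : P₂ 0 ∧ (∀ x y : LieDerivation ℝ L L, P₂ x → P₂ y → P₂ (x + y)) ∧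
      (∀ (r : ℝ) (x : LieDerivation ℝ L L), P₂ x → P₂ (r • x)) := by
    refine ⟨⟨closP₁.1, ?_, ?_⟩, fun x y hx hy => ?_, fun r x hx => ?_⟩
    · simp [LieDerivation.zero_apply]
    · simp [LieDerivation.zero_apply]
    · exact ⟨closP₁.2.1 x y hx.1 hy.1,
        by simp [LieDerivation.add_apply, map_add, Finsupp.add_apply, hx.2.1, hy.2.1],
        by simp [LieDerivation.add_apply, map_add, Finsupp.add_apply, hx.2.2, hy.2.2]⟩
    · exact ⟨closP₁.2.2 r x hx.1,
        by simp [LieDerivation.smul_apply, map_smul, Finsupp.smul_apply, hx.2.1],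
        by simp [LieDerivation.smul_apply, map_smul, Finsupp.smul_apply, hx.2.2]⟩
  -- generic induction principle for steps of the derived series
  have hspan : ∀ (k : ℕ) (p : LieDerivation ℝ L L → Prop),
      (∀ x ∈ LieAlgebra.derivedSeries ℝ (LieDerivation ℝ L L) k, ∀ y ∈ LieAlgebra.derivedSeries ℝ (LieDerivation ℝ L L) k,
        p ⁅x, y⁆) →
      p 0 → (∀ x y : LieDerivation ℝ L L, p x → p y → p (x + y)) →
      (∀ (r : ℝ) (x : LieDerivation ℝ L L), p x → p (r • x)) →
      ∀ m ∈ LieAlgebra.derivedSeries ℝ (LieDerivation ℝ L L) (k + 1), p m := by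
    intro k p hbr h0 hadd hsmul m hm
    have hsucc : LieAlgebra.derivedSeries ℝ (LieDerivation ℝ L L) (k + 1) =
        ⁅LieAlgebra.derivedSeries ℝ (LieDerivation ℝ L L) k, LieAlgebra.derivedSeries ℝ (LieDerivation ℝ L L) k⁆ := by
      rw [LieAlgebra.derivedSeries_def, LieAlgebra.derivedSeriesOfIdeal_succ,
        ← LieAlgebra.derivedSeries_def]
    rw [hsucc] at hm
    have hm' : m ∈ Submodule.span ℝ
        {m : LieDerivation ℝ L L | ∃ x ∈ LieAlgebra.derivedSeries ℝ (LieDerivation ℝ L L) k,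
          ∃ n ∈ LieAlgebra.derivedSeries ℝ (LieDerivation ℝ L L) k, ⁅x, n⁆ = m} := by
      rw [← LieSubmodule.lieIdeal_oper_eq_linear_span']
      exact hm
    refine Submodule.span_induction ?_ h0 (fun x y _ _ hx hy => hadd x y hx hy)
      (fun r x _ hx => hsmul r x hx) hm'
    rintro x ⟨u, hu, v, hv, rfl⟩
    exact hbr u hu v hv
  -- assemble solvability
  refine (LieAlgebra.isSolvable_iff ℝ _).mpr ⟨3, ?_⟩
  have hDS1 : ∀ m ∈ LieAlgebra.derivedSeries ℝ (LieDerivation ℝ L L) 1, P₁ m :=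
    hspan 0 P₁ (fun x _ y _ => stepA x y) closP₁.1 closP₁.2.1 closP₁.2.2
  have hDS2 : ∀ m ∈ LieAlgebra.derivedSeries ℝ (LieDerivation ℝ L L) 2, P₂ m :=
    hspan 1 P₂ (fun x hx y hy => stepB x y (hDS1 x hx) (hDS1 y hy)) closP₂.1
      closP₂.2.1 closP₂.2.2
  rw [LieSubmodule.eq_bot_iff]
  refine hspan 2 (fun m => m = 0)
    (fun x hx y hy => stepC x y (hDS2 x hx) (hDS2 y hy)) rfl ?_ ?_
  · rintro x y rfl rfl; simp
  · rintro r x rfl; simp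
end

section
/- Let g₁, g₂ ∈ Aff(N) be pseudohyperbolic fixed-point-free elements of the affine group of a connected simply connected nilpotent Lie group N. Then g₁ and g₂ are transversal (i.e. n = n⁺(g₁) ⊕ d⁺(g₂) = d⁺(g₁) ⊕ n⁺(g₂)) if and only if n = n⁺(g₁) ⊕ n⁺(g₂) ⊕ (d⁺(g₁) ∩ d⁺(g₂)) and dim(d⁺(g₁) ∩ d⁺(g₂)) = 1. -/
open TensorProduct

section AuxTransversal
open Module


variable {V : Type*} [AddCommGroup V] [Module ℝ V]

lemma mk_one_inj : Function.Injective ((TensorProduct.mk ℝ ℂ V) 1) := by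
  have h : ∀ x : V,
      (TensorProduct.lid ℝ V) ((LinearMap.rTensor V Complex.reLm)
        ((TensorProduct.mk ℝ ℂ V) 1 x)) = x := by
    intro x
    simp [TensorProduct.mk_apply]
  exact Function.LeftInverse.injective (g := fun y => (TensorProduct.lid ℝ V) ((LinearMap.rTensor V Complex.reLm) y)) h

noncomputable def conjT (V : Type*) [AddCommGroup V] [Module ℝ V] :
    (ℂ ⊗[ℝ] V) →ₗ[ℝ] ℂ ⊗[ℝ] V :=
  LinearMap.rTensor V (Complex.conjAe.toLinearMap)

@[simp] lemma conjT_tmul (z : ℂ) (v : V) :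
    conjT V (z ⊗ₜ[ℝ] v) = (starRingEnd ℂ z) ⊗ₜ[ℝ] v := by
  simp [conjT]

lemma conjT_smul (c : ℂ) (x : ℂ ⊗[ℝ] V) :
    conjT V (c • x) = (starRingEnd ℂ c) • conjT V x := by
  induction x using TensorProduct.induction_on with
  | zero => simp
  | tmul z v => rw [smul_tmul', conjT_tmul, conjT_tmul, smul_tmul', smul_eq_mul, smul_eq_mul,
      map_mul]
  | add a b ha hb => simp [smul_add, ha, hb]

lemma exists_repr (x : ℂ ⊗[ℝ] V) : ∃ a b : V, x = 1 ⊗ₜ[ℝ] a + Complex.I ⊗ₜ[ℝ] b := by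
  induction x using TensorProduct.induction_on with
  | zero => exact ⟨0, 0, by simp⟩
  | tmul z v =>
    refine ⟨z.re • v, z.im • v, ?_⟩
    rw [← TensorProduct.smul_tmul, ← TensorProduct.smul_tmul, ← TensorProduct.add_tmul]
    congr 1
    simp [Complex.real_smul]
  | add a b ha hb =>
    obtain ⟨a₁, b₁, rfl⟩ := ha
    obtain ⟨a₂, b₂, rfl⟩ := hb
    exact ⟨a₁ + a₂, b₁ + b₂, by rw [TensorProduct.tmul_add, TensorProduct.tmul_add]; abel⟩

lemma conjT_fixed {x : ℂ ⊗[ℝ] V} (h : conjT V x = x) : ∃ v : V, x = 1 ⊗ₜ[ℝ] v := by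
  obtain ⟨a, b, rfl⟩ := exists_repr x
  have h2 : (-Complex.I) ⊗ₜ[ℝ] b = Complex.I ⊗ₜ[ℝ] b := by
    have := h
    simp only [map_add, conjT_tmul, Complex.conj_I, map_one] at this
    exact add_left_cancel this
  have h3 : Complex.I ⊗ₜ[ℝ] b = 0 := by
    have h4 : (2 : ℝ) • (Complex.I ⊗ₜ[ℝ] b) = 0 := by
      rw [two_smul]
      nth_rewrite 1 [← h2]
      rw [TensorProduct.neg_tmul]
      abel
    simpa using h4
  exact ⟨a, by rw [h3, add_zero]⟩


lemma conjT_one_tmul {V : Type*} [AddCommGroup V] [Module ℝ V] (v : V) :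
    conjT V ((1 : ℂ) ⊗ₜ[ℝ] v) = (1 : ℂ) ⊗ₜ[ℝ] v := by
  simp

lemma conjT_baseChange (f : V →ₗ[ℝ] V) (x : ℂ ⊗[ℝ] V) :
    conjT V ((LinearMap.baseChange ℂ f) x) = (LinearMap.baseChange ℂ f) (conjT V x) := by
  induction x using TensorProduct.induction_on with
  | zero => simp
  | tmul z v => simp [LinearMap.baseChange_tmul]
  | add a b ha hb => simp [ha, hb]

lemma conjT_mem_maxGenEigenspace (f : V →ₗ[ℝ] V) {μ : ℂ} {x : ℂ ⊗[ℝ] V}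
    (hx : x ∈ Module.End.maxGenEigenspace (LinearMap.baseChange ℂ f) μ) :
    conjT V x ∈ Module.End.maxGenEigenspace (LinearMap.baseChange ℂ f) (starRingEnd ℂ μ) := by
  rw [Module.End.mem_maxGenEigenspace] at hx ⊢
  obtain ⟨k, hk⟩ := hx
  refine ⟨k, ?_⟩
  have key : ∀ y : ℂ ⊗[ℝ] V,
      (LinearMap.baseChange ℂ f - (starRingEnd ℂ μ) • (1 : Module.End ℂ (ℂ ⊗[ℝ] V)))
        (conjT V y)
      = conjT V ((LinearMap.baseChange ℂ f - μ • (1 : Module.End ℂ (ℂ ⊗[ℝ] V))) y) := by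
    intro y
    simp only [LinearMap.sub_apply, LinearMap.smul_apply, Module.End.one_apply, map_sub,
      conjT_baseChange, conjT_smul]
  have key2 : ∀ (m : ℕ) (y : ℂ ⊗[ℝ] V),
      ((LinearMap.baseChange ℂ f - (starRingEnd ℂ μ) • (1 : Module.End ℂ (ℂ ⊗[ℝ] V))) ^ m)
        (conjT V y)
      = conjT V (((LinearMap.baseChange ℂ f - μ • (1 : Module.End ℂ (ℂ ⊗[ℝ] V))) ^ m) y) := by
    intro m
    induction m with
    | zero => intro y; simp
    | succ p ih =>
      intro y
      rw [pow_succ, pow_succ, Module.End.mul_apply, Module.End.mul_apply, key, ih]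
  rw [key2, hk, map_zero]

lemma disjoint_biSup_of_disjoint {R M ι : Type*} [Ring R] [AddCommGroup M] [Module R M]
    {p : ι → Submodule R M} (hp : iSupIndep p) {s t : Set ι} (hst : Disjoint s t) :
    Disjoint (⨆ i ∈ s, p i) (⨆ i ∈ t, p i) := by
  classical
  rw [Submodule.disjoint_def]
  intro x hxs hxt
  rw [Submodule.mem_biSup_iff_exists_dfinsupp] at hxs hxt
  obtain ⟨f, hf⟩ := hxs
  obtain ⟨g, hg⟩ := hxt
  have heq : DFinsupp.filter (· ∈ s) f = DFinsupp.filter (· ∈ t) g :=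
    hp.dfinsupp_lsum_injective (hf.trans hg.symm)
  have hzero : DFinsupp.filter (· ∈ s) f = 0 := by
    ext i
    by_cases hi : i ∈ s
    · have h1 : (DFinsupp.filter (· ∈ s) f) i = (DFinsupp.filter (· ∈ t) g) i := by rw [heq]
      rw [DFinsupp.filter_apply_pos f hi, DFinsupp.filter_apply_neg g
        (Set.disjoint_left.mp hst hi)] at h1
      simp [DFinsupp.filter_apply_pos f hi, h1]
    · simp [DFinsupp.filter_apply_neg f hi]
  rw [hzero, map_zero] at hf
  exact hf.symm

lemma conjT_mem_biSup (f : V →ₗ[ℝ] V) {s : Set ℂ}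
    (hs : ∀ μ ∈ s, starRingEnd ℂ μ ∈ s) {x : ℂ ⊗[ℝ] V}
    (hx : x ∈ ⨆ μ ∈ s, Module.End.maxGenEigenspace (LinearMap.baseChange ℂ f) μ) :
    conjT V x ∈ ⨆ μ ∈ s, Module.End.maxGenEigenspace (LinearMap.baseChange ℂ f) μ := by
  rw [iSup_subtype'] at hx
  refine Submodule.iSup_induction _ (motive := fun y =>
    conjT V y ∈ ⨆ μ ∈ s, Module.End.maxGenEigenspace (LinearMap.baseChange ℂ f) μ) hx
    ?_ (by simp) ?_
  · rintro ⟨μ, hμ⟩ y hy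
    exact le_iSup₂ (f := fun μ _ => Module.End.maxGenEigenspace (LinearMap.baseChange ℂ f) μ)
      (starRingEnd ℂ μ) (hs μ hμ) (conjT_mem_maxGenEigenspace f hy)
  · intro a b ha hb
    rw [map_add]
    exact Submodule.add_mem _ ha hb



lemma mem_modulusSubspace {f : V →ₗ[ℝ] V} {P : ℝ → Prop} {x : V} :
    x ∈ modulusSubspace f P ↔ (1 : ℂ) ⊗ₜ[ℝ] x ∈
      ⨆ μ ∈ {z : ℂ | P (‖z‖)},
        Module.End.maxGenEigenspace (LinearMap.baseChange ℂ f) μ :=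
  Iff.rfl

lemma modulusSubspace_mono (f : V →ₗ[ℝ] V) {P Q : ℝ → Prop} (h : ∀ r, P r → Q r) :
    modulusSubspace f P ≤ modulusSubspace f Q := by
  intro x hx
  rw [mem_modulusSubspace] at hx ⊢
  have hle : (⨆ μ ∈ {z : ℂ | P (‖z‖)},
        Module.End.maxGenEigenspace (LinearMap.baseChange ℂ f) μ)
      ≤ ⨆ μ ∈ {z : ℂ | Q (‖z‖)},
        Module.End.maxGenEigenspace (LinearMap.baseChange ℂ f) μ :=
    biSup_mono (fun μ hμ => h _ hμ)
  exact hle hx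

lemma modulusSubspace_inf (f : V →ₗ[ℝ] V) {P Q : ℝ → Prop} (h : ∀ r, P r → Q r → False) :
    modulusSubspace f P ⊓ modulusSubspace f Q = ⊥ := by
  rw [eq_bot_iff]
  rintro x ⟨hxP, hxQ⟩
  rw [Submodule.mem_bot]
  apply mk_one_inj
  rw [map_zero]
  have hd : Disjoint {z : ℂ | P (‖z‖)} {z : ℂ | Q (‖z‖)} := by
    rw [Set.disjoint_left]
    intro z hz hz'
    exact h _ hz hz'
  exact Submodule.disjoint_def.mp
    (disjoint_biSup_of_disjoint (Module.End.independent_maxGenEigenspace _) hd) _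
    (mem_modulusSubspace.mp hxP) (mem_modulusSubspace.mp hxQ)

lemma modulusSubspace_sup (f : V →ₗ[ℝ] V) {P Q R : ℝ → Prop}
    (hR : ∀ r, R r ↔ P r ∨ Q r) (h : ∀ r, P r → Q r → False) :
    modulusSubspace f P ⊔ modulusSubspace f Q = modulusSubspace f R := by
  apply le_antisymm
  · exact sup_le (modulusSubspace_mono f fun r hr => (hR r).mpr (Or.inl hr))
      (modulusSubspace_mono f fun r hr => (hR r).mpr (Or.inr hr))
  · intro v hv
    rw [mem_modulusSubspace] at hv
    have hsets : {z : ℂ | R (‖z‖)}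
        = {z : ℂ | P (‖z‖)} ∪ {z : ℂ | Q (‖z‖)} := by
      ext z
      exact hR _
    rw [hsets, iSup_union] at hv
    obtain ⟨x, hx, y, hy, hxy⟩ := Submodule.mem_sup.mp hv
    have hd : Disjoint {z : ℂ | P (‖z‖)} {z : ℂ | Q (‖z‖)} := by
      rw [Set.disjoint_left]
      intro z hz hz'
      exact h _ hz hz'
    have hdisj := disjoint_biSup_of_disjoint
      (Module.End.independent_maxGenEigenspace (LinearMap.baseChange ℂ f)) hd
    have hconjP : ∀ μ ∈ {z : ℂ | P (‖z‖)}, starRingEnd ℂ μ ∈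
        {z : ℂ | P (‖z‖)} := by
      intro μ hμ
      simpa [Complex.norm_conj] using hμ
    have hconjQ : ∀ μ ∈ {z : ℂ | Q (‖z‖)}, starRingEnd ℂ μ ∈
        {z : ℂ | Q (‖z‖)} := by
      intro μ hμ
      simpa [Complex.norm_conj] using hμ
    have hsum : conjT V x + conjT V y = x + y := by
      rw [← map_add, hxy, conjT_one_tmul]
    have hmemP : conjT V x - x ∈ ⨆ μ ∈ {z : ℂ | P (‖z‖)},
        Module.End.maxGenEigenspace (LinearMap.baseChange ℂ f) μ :=
      sub_mem (conjT_mem_biSup f hconjP hx) hx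
    have hmemQ : conjT V x - x ∈ ⨆ μ ∈ {z : ℂ | Q (‖z‖)},
        Module.End.maxGenEigenspace (LinearMap.baseChange ℂ f) μ := by
      have : conjT V x - x = y - conjT V y :=
        sub_eq_sub_iff_add_eq_add.mpr (hsum.trans (add_comm x y))
      rw [this]
      exact sub_mem hy (conjT_mem_biSup f hconjQ hy)
    have hfix : conjT V x = x := by
      have h0 : conjT V x - x = 0 :=
        Submodule.disjoint_def.mp hdisj _ hmemP hmemQ
      exact sub_eq_zero.mp h0
    have hfiy : conjT V y = y := by
      have h5 : conjT V y - y = x - conjT V x :=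
        sub_eq_sub_iff_add_eq_add.mpr (by rw [add_comm]; exact hsum)
      have h0 : conjT V y - y = 0 := by rw [h5, hfix, sub_self]
      exact sub_eq_zero.mp h0
    obtain ⟨a, ha⟩ := conjT_fixed hfix
    obtain ⟨b, hb⟩ := conjT_fixed hfiy
    have hv' : v = a + b := by
      apply mk_one_inj
      show (1 : ℂ) ⊗ₜ[ℝ] v = (1 : ℂ) ⊗ₜ[ℝ] (a + b)
      rw [TensorProduct.tmul_add, ← ha, ← hb, hxy]
    rw [hv']
    exact Submodule.add_mem_sup
      (show a ∈ modulusSubspace f P by rw [mem_modulusSubspace, ← ha]; exact hx)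
      (show b ∈ modulusSubspace f Q by rw [mem_modulusSubspace, ← hb]; exact hy)


lemma abstract_iff {K V : Type*} [Field K] [AddCommGroup V] [Module K V]
    [FiniteDimensional K V]
    {A B Z₁ Z₂ D₁ D₂ : Submodule K V}
    (hD₁ : A ⊔ Z₁ = D₁) (hAZ₁ : A ⊓ Z₁ = ⊥) (hZ₁ : Module.finrank K Z₁ = 1)
    (hD₂ : B ⊔ Z₂ = D₂) (hBZ₂ : B ⊓ Z₂ = ⊥) (hZ₂ : Module.finrank K Z₂ = 1) :
    (A ⊓ D₂ = ⊥ ∧ A ⊔ D₂ = ⊤ ∧ D₁ ⊓ B = ⊥ ∧ D₁ ⊔ B = ⊤) ↔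
    (A ⊔ B ⊔ (D₁ ⊓ D₂) = ⊤ ∧ A ⊓ (B ⊔ (D₁ ⊓ D₂)) = ⊥ ∧ B ⊓ (A ⊔ (D₁ ⊓ D₂)) = ⊥ ∧
      (D₁ ⊓ D₂) ⊓ (A ⊔ B) = ⊥ ∧ Module.finrank K ↥(D₁ ⊓ D₂) = 1) := by
  have hA : A ≤ D₁ := le_sup_left.trans hD₁.le
  have hB : B ≤ D₂ := le_sup_left.trans hD₂.le
  have hC1 : D₁ ⊓ D₂ ≤ D₁ := inf_le_left
  have hC2 : D₁ ⊓ D₂ ≤ D₂ := inf_le_right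
  have hdD₁ : finrank K D₁ = finrank K A + 1 := by
    have := Submodule.finrank_sup_add_finrank_inf_eq A Z₁
    rw [hD₁, hAZ₁, hZ₁, finrank_bot, add_zero] at this
    omega
  have hdD₂ : finrank K D₂ = finrank K B + 1 := by
    have := Submodule.finrank_sup_add_finrank_inf_eq B Z₂
    rw [hD₂, hBZ₂, hZ₂, finrank_bot, add_zero] at this
    omega
  constructor
  · rintro ⟨h1, h2, h3, h4⟩
    have hn1 : finrank K A + (finrank K B + 1) = finrank K V := by
      have := Submodule.finrank_sup_add_finrank_inf_eq A D₂
      rw [h1, h2, finrank_bot, finrank_top, add_zero, hdD₂] at this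
      omega
    have hDD : D₁ ⊔ D₂ = ⊤ := by
      rw [eq_top_iff, ← h2]
      exact sup_le_sup_right hA _
    have hdC : finrank K ↥(D₁ ⊓ D₂) = 1 := by
      have := Submodule.finrank_sup_add_finrank_inf_eq D₁ D₂
      rw [hDD, finrank_top, hdD₁, hdD₂] at this
      omega
    have hABbot : A ⊓ (B ⊔ (D₁ ⊓ D₂)) = ⊥ := by
      rw [eq_bot_iff, ← h1]
      exact inf_le_inf_left A (sup_le hB hC2)
    have hBAbot : B ⊓ (A ⊔ (D₁ ⊓ D₂)) = ⊥ := by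
      rw [eq_bot_iff, ← h3, inf_comm D₁ B]
      exact inf_le_inf_left B (sup_le hA hC1)
    have hmod : (A ⊔ B) ⊓ D₁ = A := by
      rw [sup_inf_assoc_of_le B hA, inf_comm B D₁, h3, sup_bot_eq]
    have hCbot : (D₁ ⊓ D₂) ⊓ (A ⊔ B) = ⊥ := by
      rw [eq_bot_iff]
      rintro x ⟨⟨hx1, hx2⟩, hx3⟩
      have hxA : x ∈ A := by
        rw [← hmod]
        exact ⟨hx3, hx1⟩
      rw [← h1]
      exact ⟨hxA, hx2⟩
    have hABtop : A ⊔ B ⊔ (D₁ ⊓ D₂) = ⊤ := by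
      have hABinf : A ⊓ B = ⊥ := by
        rw [eq_bot_iff, ← h1]
        exact inf_le_inf_left A hB
      have hdAB : finrank K ↥(A ⊔ B) = finrank K A + finrank K B := by
        have := Submodule.finrank_sup_add_finrank_inf_eq A B
        rw [hABinf, finrank_bot, add_zero] at this
        omega
      have hinf0 : (A ⊔ B) ⊓ (D₁ ⊓ D₂) = ⊥ := by
        rw [inf_comm]
        exact hCbot
      have := Submodule.finrank_sup_add_finrank_inf_eq (A ⊔ B) (D₁ ⊓ D₂)
      rw [hinf0, finrank_bot, add_zero, hdAB, hdC] at this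
      exact Submodule.eq_top_of_finrank_eq (by omega)
    exact ⟨hABtop, hABbot, hBAbot, hCbot, hdC⟩
  · rintro ⟨g1, g2, g3, g4, g5⟩
    have hBC : B ⊓ (D₁ ⊓ D₂) = ⊥ := by
      rw [eq_bot_iff, ← g3]
      exact inf_le_inf_left B le_sup_right
    have hdBC : finrank K ↥(B ⊔ (D₁ ⊓ D₂)) = finrank K B + 1 := by
      have := Submodule.finrank_sup_add_finrank_inf_eq B (D₁ ⊓ D₂)
      rw [hBC, finrank_bot, add_zero, g5] at this
      omega
    have hn : finrank K A + (finrank K B + 1) = finrank K V := by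
      have := Submodule.finrank_sup_add_finrank_inf_eq A (B ⊔ (D₁ ⊓ D₂))
      rw [g2, finrank_bot, add_zero, hdBC, ← sup_assoc, g1, finrank_top] at this
      omega
    have h2 : A ⊔ D₂ = ⊤ := by
      rw [eq_top_iff, ← g1]
      exact sup_le (sup_le le_sup_left (hB.trans le_sup_right)) (hC2.trans le_sup_right)
    have h4 : D₁ ⊔ B = ⊤ := by
      rw [eq_top_iff, ← g1]
      exact sup_le (sup_le (hA.trans le_sup_left) le_sup_right) (hC1.trans le_sup_left)
    have h1 : A ⊓ D₂ = ⊥ := by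
      have := Submodule.finrank_sup_add_finrank_inf_eq A D₂
      rw [h2, finrank_top, hdD₂] at this
      have h0 : finrank K ↥(A ⊓ D₂) = 0 := by omega
      exact (Submodule.finrank_eq_zero).mp h0
    have h3 : D₁ ⊓ B = ⊥ := by
      have := Submodule.finrank_sup_add_finrank_inf_eq D₁ B
      rw [h4, finrank_top, hdD₁] at this
      have h0 : finrank K ↥(D₁ ⊓ B) = 0 := by omega
      exact (Submodule.finrank_eq_zero).mp h0
    exact ⟨h1, h2, h3, h4⟩

end AuxTransversal

/-- Let `g₁, g₂` be pseudohyperbolic elements of `Aff(N)`, with linear parts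
`f₁, f₂ ∈ Aut(n)` (so `dim n⁰(gᵢ) = 1` and `fᵢ` is the identity on `n⁰(gᵢ)`).
Writing `n⁺(gᵢ)` for the modulus `> 1` part and `d⁺(gᵢ) = n⁺(gᵢ) ⊕ n⁰(gᵢ)` for the
modulus `≥ 1` part, `g₁` and `g₂` are transversal, i.e.
`n = n⁺(g₁) ⊕ d⁺(g₂) = d⁺(g₁) ⊕ n⁺(g₂)`, if and only if
`n = n⁺(g₁) ⊕ n⁺(g₂) ⊕ (d⁺(g₁) ∩ d⁺(g₂))` and `dim (d⁺(g₁) ∩ d⁺(g₂)) = 1`. -/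
theorem transversal_iff
    {n : Type*} [LieRing n] [LieAlgebra ℝ n] [FiniteDimensional ℝ n]
    (f₁ f₂ : n ≃ₗ⁅ℝ⁆ n)
    (h₁dim : Module.finrank ℝ
      (modulusSubspace (f₁.toLinearEquiv : n →ₗ[ℝ] n) (fun r => r = 1)) = 1)
    (h₁id : ∀ v ∈ modulusSubspace (f₁.toLinearEquiv : n →ₗ[ℝ] n) (fun r => r = 1),
      f₁ v = v)
    (h₂dim : Module.finrank ℝ
      (modulusSubspace (f₂.toLinearEquiv : n →ₗ[ℝ] n) (fun r => r = 1)) = 1)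
    (h₂id : ∀ v ∈ modulusSubspace (f₂.toLinearEquiv : n →ₗ[ℝ] n) (fun r => r = 1),
      f₂ v = v) :
    (modulusSubspace (f₁.toLinearEquiv : n →ₗ[ℝ] n) (fun r => 1 < r)
        ⊓ modulusSubspace (f₂.toLinearEquiv : n →ₗ[ℝ] n) (fun r => 1 ≤ r) = ⊥ ∧
     modulusSubspace (f₁.toLinearEquiv : n →ₗ[ℝ] n) (fun r => 1 < r)
        ⊔ modulusSubspace (f₂.toLinearEquiv : n →ₗ[ℝ] n) (fun r => 1 ≤ r) = ⊤ ∧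
     modulusSubspace (f₁.toLinearEquiv : n →ₗ[ℝ] n) (fun r => 1 ≤ r)
        ⊓ modulusSubspace (f₂.toLinearEquiv : n →ₗ[ℝ] n) (fun r => 1 < r) = ⊥ ∧
     modulusSubspace (f₁.toLinearEquiv : n →ₗ[ℝ] n) (fun r => 1 ≤ r)
        ⊔ modulusSubspace (f₂.toLinearEquiv : n →ₗ[ℝ] n) (fun r => 1 < r) = ⊤)
    ↔
    (let A := modulusSubspace (f₁.toLinearEquiv : n →ₗ[ℝ] n) (fun r => 1 < r)
     let B := modulusSubspace (f₂.toLinearEquiv : n →ₗ[ℝ] n) (fun r => 1 < r)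
     let C := modulusSubspace (f₁.toLinearEquiv : n →ₗ[ℝ] n) (fun r => 1 ≤ r)
        ⊓ modulusSubspace (f₂.toLinearEquiv : n →ₗ[ℝ] n) (fun r => 1 ≤ r)
     A ⊔ B ⊔ C = ⊤ ∧ A ⊓ (B ⊔ C) = ⊥ ∧ B ⊓ (A ⊔ C) = ⊥ ∧ C ⊓ (A ⊔ B) = ⊥ ∧
       Module.finrank ℝ C = 1) := by
  have key := fun (f : n ≃ₗ⁅ℝ⁆ n)
      (hdim : Module.finrank ℝ
        (modulusSubspace (f.toLinearEquiv : n →ₗ[ℝ] n) (fun r => r = 1)) = 1) =>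
    (modulusSubspace_sup (f.toLinearEquiv : n →ₗ[ℝ] n)
      (P := fun r => 1 < r) (Q := fun r => r = 1) (R := fun r => 1 ≤ r)
      (fun r => by constructor
                   · intro h
                     rcases lt_or_eq_of_le h with h' | h'
                     · exact Or.inl h'
                     · exact Or.inr h'.symm
                   · rintro (h | h)
                     · exact le_of_lt h
                     · exact h.ge)
      (fun r h1 h2 => absurd (h2 ▸ h1) (lt_irrefl 1)))
  have keyinf := fun (f : n ≃ₗ⁅ℝ⁆ n) =>
    modulusSubspace_inf (f.toLinearEquiv : n →ₗ[ℝ] n)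
      (P := fun r => 1 < r) (Q := fun r => r = 1)
      (fun r h1 h2 => absurd (h2 ▸ h1) (lt_irrefl 1))
  exact abstract_iff (key f₁ h₁dim) (keyinf f₁) h₁dim (key f₂ h₂dim) (keyinf f₂) h₂dim
end
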